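/- arXiv:1812.10275 — 2 statements merged into one kernel-verified Lean document; each statement's English description precedes it below -/
import Mathlib

section
/- Let α > 0, let d ≥ 1 be an integer, let L ≥ 1 and c ∈ (0,1], and let D be a step distribution on ℤ^d satisfying the power-law condition with parameters α, L, c. Then there exists Δ ∈ (0,1) (allowed to depend on d, α, c and L) such that: (i) 1 − D̂(k) < 2 − Δ for all k ∈ [−π,π]^d, and (ii) 1 − D̂(k) > Δ for all k ∈ [−π,π]^d with |k| > 1/L. (Property (D1), uniform k-space bounds.) -/
open scoped BigOperators
open Real Filter

noncomputable section

/-- Embed a lattice point into Euclidean space. -/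
def toR (d : ℕ) (x : Fin d → ℤ) : EuclideanSpace ℝ (Fin d) := WithLp.toLp 2 (fun i => (x i : ℝ))

/-- Euclidean norm of a lattice point. -/
def nrm (d : ℕ) (x : Fin d → ℤ) : ℝ := ‖toR d x‖

/-- Euclidean inner product between `k` and a lattice point `x`. -/
def dotp (d : ℕ) (k : EuclideanSpace ℝ (Fin d)) (x : Fin d → ℤ) : ℝ :=
  ∑ i, k i * (x i : ℝ)

/-- `D` is a (symmetric) step distribution on `ℤ^d`. -/
def IsStepDistribution (d : ℕ) (D : (Fin d → ℤ) → ℝ) : Prop :=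
  (∀ x, 0 ≤ D x) ∧ HasSum D 1 ∧ (∀ x, D (-x) = D x)

/-- The power-law condition with parameters `α, L, c`. -/
def PowerLawCondition (d : ℕ) (α L c : ℝ) (D : (Fin d → ℤ) → ℝ) : Prop :=
  ∀ x, c * L ^ (-(d : ℝ)) * (max (nrm d x / L) 1) ^ (-(d : ℝ) - α) ≤ D x ∧
       D x ≤ c⁻¹ * L ^ (-(d : ℝ)) * (max (nrm d x / L) 1) ^ (-(d : ℝ) - α)

/-- Fourier transform `D̂(k) = Σ_x cos(k⬝x) D(x)`. -/
def fhat (d : ℕ) (D : (Fin d → ℤ) → ℝ) (k : EuclideanSpace ℝ (Fin d)) : ℝ :=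
  ∑' x : Fin d → ℤ, Real.cos (dotp d k x) * D x

/-- `n`-fold convolution of `D` (with the 0-fold convolution the delta at 0). -/
def convPow (d : ℕ) (D : (Fin d → ℤ) → ℝ) : ℕ → (Fin d → ℤ) → ℝ
  | 0 => fun x => if x = 0 then 1 else 0
  | n + 1 => fun x => ∑' y : Fin d → ℤ, convPow d D n y * D (x - y)

/-- Random-walk Green function `S₁(x) = Σ_n D^{*n}(x)`. -/
def green (d : ℕ) (D : (Fin d → ℤ) → ℝ) (x : Fin d → ℤ) : ℝ :=
  ∑' n : ℕ, convPow d D n x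

/-- `⟨t⟩_r = (π/2) ⬝ max(t, r)`. -/
def vee (t r : ℝ) : ℝ := Real.pi / 2 * max t r

/-- The constant `γ_α`. -/
def gammaA (d : ℕ) (α : ℝ) : ℝ :=
  Real.Gamma (((d : ℝ) - α) / 2) /
    (2 ^ α * Real.pi ^ ((d : ℝ) / 2) * Real.Gamma (α / 2))


lemma dotp_zero' (d : ℕ) (k : EuclideanSpace ℝ (Fin d)) : dotp d k 0 = 0 := by
  simp [dotp]

lemma dotp_single' (d : ℕ) (k : EuclideanSpace ℝ (Fin d)) (i : Fin d) :
    dotp d k (Pi.single i 1) = k i := by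
  simp [dotp, Pi.single_apply]

lemma cos_lt_one_of (t : ℝ) (ht : t ≠ 0) (hpi : |t| ≤ Real.pi) : Real.cos t < 1 := by
  have h0 : 0 < |t| := abs_pos.mpr ht
  have h := Real.strictAntiOn_cos ⟨le_refl 0, Real.pi_pos.le⟩ ⟨abs_nonneg t, hpi⟩ h0
  rw [Real.cos_zero, Real.cos_abs] at h
  exact h

/-- Property (D1), uniform k-space bounds: there is `Δ ∈ (0,1)` with
`1 - D̂(k) < 2 - Δ` on `[-π,π]^d`, and `1 - D̂(k) > Δ` for `|k| > 1/L`. -/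
theorem kspace_uniform_bounds
    (d : ℕ) (hd : 1 ≤ d) (α L c : ℝ) (hα : 0 < α) (hL : 1 ≤ L)
    (hc0 : 0 < c) (hc1 : c ≤ 1)
    (D : (Fin d → ℤ) → ℝ) (hD : IsStepDistribution d D)
    (hPL : PowerLawCondition d α L c D) :
    ∃ Δ : ℝ, 0 < Δ ∧ Δ < 1 ∧
      (∀ k : EuclideanSpace ℝ (Fin d), (∀ i, |k i| ≤ Real.pi) →
        1 - fhat d D k < 2 - Δ) ∧
      (∀ k : EuclideanSpace ℝ (Fin d), (∀ i, |k i| ≤ Real.pi) → 1 / L < ‖k‖ →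
        Δ < 1 - fhat d D k) := by
  obtain ⟨hDnn, hSum, _⟩ := hD
  have hSD : Summable D := hSum.summable
  have htD : ∑' x, D x = 1 := hSum.tsum_eq
  have hL0 : (0:ℝ) < L := lt_of_lt_of_le one_pos hL
  have hpos : ∀ x, 0 < D x := by
    intro x
    refine lt_of_lt_of_le ?_ (hPL x).1
    have h1 : (0:ℝ) < L ^ (-(d:ℝ)) := Real.rpow_pos_of_pos hL0 _
    have h2 : (0:ℝ) < (max (nrm d x / L) 1) ^ (-(d:ℝ) - α) :=
      Real.rpow_pos_of_pos (lt_of_lt_of_le one_pos (le_max_right _ _)) _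
    exact mul_pos (mul_pos hc0 h1) h2
  have hbound : ∀ (k : EuclideanSpace ℝ (Fin d)) x, ‖Real.cos (dotp d k x) * D x‖ ≤ D x := by
    intro k x
    rw [norm_mul]
    calc ‖Real.cos (dotp d k x)‖ * ‖D x‖ ≤ 1 * D x := by
          apply mul_le_mul (Real.abs_cos_le_one _) (le_of_eq (abs_of_nonneg (hDnn x)))
            (abs_nonneg _) one_pos.le
      _ = D x := one_mul _
  have hcos_sum : ∀ k : EuclideanSpace ℝ (Fin d),
      Summable (fun x => Real.cos (dotp d k x) * D x) := fun k =>
    hSD.of_norm_bounded (hbound k)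
  have honem_sum : ∀ k : EuclideanSpace ℝ (Fin d),
      Summable (fun x => (1 - Real.cos (dotp d k x)) * D x) := by
    intro k
    have h := hSD.sub (hcos_sum k)
    apply h.congr
    intro x; ring
  have hkey : ∀ k : EuclideanSpace ℝ (Fin d),
      1 - fhat d D k = ∑' x, (1 - Real.cos (dotp d k x)) * D x := by
    intro k
    have h1 : ∑' x, (1 - Real.cos (dotp d k x)) * D x
        = ∑' x, (D x - Real.cos (dotp d k x) * D x) := tsum_congr fun x => by ring
    rw [h1, Summable.tsum_sub hSD (hcos_sum k), htD, fhat]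
  -- upper bound
  have hsumite : Summable (fun x : Fin d → ℤ => if x = 0 then 2 * D 0 else 0) :=
    (hasSum_ite_eq (0 : Fin d → ℤ) (2 * D 0)).summable
  have hub : ∀ k : EuclideanSpace ℝ (Fin d), 1 - fhat d D k ≤ 2 - 2 * D 0 := by
    intro k
    rw [hkey k]
    have hsumu : Summable (fun x : Fin d → ℤ =>
        2 * D x - (if x = 0 then 2 * D 0 else 0)) := (hSD.mul_left 2).sub hsumite
    have hterm : ∀ x, (1 - Real.cos (dotp d k x)) * D x
        ≤ 2 * D x - (if x = 0 then 2 * D 0 else 0) := by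
      intro x
      by_cases hx : x = 0
      · subst hx
        simp [dotp_zero']
      · simp only [if_neg hx]
        have h1 : 1 - Real.cos (dotp d k x) ≤ 2 := by
          nlinarith [Real.neg_one_le_cos (dotp d k x)]
        nlinarith [hDnn x]
    calc ∑' x, (1 - Real.cos (dotp d k x)) * D x
        ≤ ∑' x, (2 * D x - (if x = 0 then 2 * D 0 else 0)) :=
          Summable.tsum_le_tsum hterm (honem_sum k) hsumu
      _ = 2 * (∑' x, D x) - 2 * D 0 := by
          rw [Summable.tsum_sub (hSD.mul_left 2) hsumite, tsum_mul_left, tsum_ite_eq]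
      _ = 2 - 2 * D 0 := by rw [htD]; ring
  -- lower bound by single term
  have hlb : ∀ (k : EuclideanSpace ℝ (Fin d)) (i : Fin d),
      (1 - Real.cos (k i)) * D (Pi.single i 1) ≤ 1 - fhat d D k := by
    intro k i
    rw [hkey k]
    have h := Summable.le_tsum (honem_sum k) (Pi.single i 1) (fun j _ =>
      mul_nonneg (by nlinarith [Real.cos_le_one (dotp d k j)]) (hDnn j))
    rwa [dotp_single'] at h
  -- continuity
  have hcont : Continuous fun k : EuclideanSpace ℝ (Fin d) => 1 - fhat d D k := by
    have hc : Continuous (fhat d D) := by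
      apply continuous_tsum (u := D) ?_ hSD (fun x k => hbound k x)
      intro x
      exact (Real.continuous_cos.comp
        (continuous_finset_sum _ fun i _ => ((EuclideanSpace.proj (𝕜 := ℝ) i).continuous.mul continuous_const))).mul
        continuous_const
    exact continuous_const.sub hc
  -- the compact set
  set K : Set (EuclideanSpace ℝ (Fin d)) :=
    {k | (∀ i, |k i| ≤ Real.pi) ∧ 1 / L ≤ ‖k‖} with hKdef
  have hKclosed : IsClosed K := by
    have h1 : IsClosed {k : EuclideanSpace ℝ (Fin d) | ∀ i, |k i| ≤ Real.pi} := by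
      have he : {k : EuclideanSpace ℝ (Fin d) | ∀ i, |k i| ≤ Real.pi}
          = ⋂ i, {k : EuclideanSpace ℝ (Fin d) | |k i| ≤ Real.pi} := by
        ext k; simp
      rw [he]
      exact isClosed_iInter fun i =>
        isClosed_le ((EuclideanSpace.proj i).continuous.abs) continuous_const
    have h2 : IsClosed {k : EuclideanSpace ℝ (Fin d) | 1 / L ≤ ‖k‖} :=
      isClosed_le continuous_const continuous_norm
    exact h1.inter h2
  have hKsub : K ⊆ Metric.closedBall 0 (Real.pi * Real.sqrt d) := by
    intro k hk
    rw [Metric.mem_closedBall, dist_zero_right, EuclideanSpace.norm_eq]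
    have hsum : (∑ i, ‖k i‖ ^ 2) ≤ (d : ℝ) * Real.pi ^ 2 := by
      calc (∑ i, ‖k i‖ ^ 2) ≤ ∑ _i : Fin d, Real.pi ^ 2 := by
            apply Finset.sum_le_sum
            intro i _
            have := hk.1 i
            have h0 : ‖k i‖ = |k i| := Real.norm_eq_abs _
            nlinarith [abs_nonneg (k i)]
        _ = (d : ℝ) * Real.pi ^ 2 := by simp [mul_comm]
    calc Real.sqrt (∑ i, ‖k i‖ ^ 2) ≤ Real.sqrt ((d : ℝ) * Real.pi ^ 2) :=
          Real.sqrt_le_sqrt hsum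
      _ = Real.pi * Real.sqrt d := by
          rw [Real.sqrt_mul (Nat.cast_nonneg d), Real.sqrt_sq Real.pi_pos.le, mul_comm]
  have hKcompact : IsCompact K :=
    Metric.isCompact_of_isClosed_isBounded hKclosed
      (Metric.isBounded_closedBall.subset hKsub)
  have hKne : K.Nonempty := by
    refine ⟨EuclideanSpace.single ⟨0, hd⟩ Real.pi, ?_, ?_⟩
    · intro i
      rw [EuclideanSpace.single_apply]
      by_cases h : i = ⟨0, hd⟩ <;> simp [h, abs_of_nonneg Real.pi_pos.le, Real.pi_pos.le]
    · rw [EuclideanSpace.norm_single, Real.norm_eq_abs, abs_of_nonneg Real.pi_pos.le]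
      calc 1 / L ≤ 1 := by
            rw [div_le_one hL0]; exact hL
        _ ≤ Real.pi := by nlinarith [Real.pi_gt_three]
  obtain ⟨k₀, hk₀K, hmin⟩ := hKcompact.exists_isMinOn hKne hcont.continuousOn
  set ε := 1 - fhat d D k₀ with hεdef
  have hε : 0 < ε := by
    have hk₀ne : ∃ i, k₀ i ≠ 0 := by
      by_contra h
      push_neg at h
      have hz : k₀ = 0 := by ext i; simpa using h i
      have h2 := hk₀K.2
      rw [hz, norm_zero] at h2
      have h1L : (0:ℝ) < 1 / L := by positivity
      linarith
    obtain ⟨i, hi⟩ := hk₀ne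
    have hclt : Real.cos (k₀ i) < 1 := cos_lt_one_of _ hi (hk₀K.1 i)
    calc (0:ℝ) < (1 - Real.cos (k₀ i)) * D (Pi.single i 1) :=
          mul_pos (by linarith) (hpos _)
      _ ≤ ε := hlb k₀ i
  have hD01 : D 0 ≤ 1 := by
    have := Summable.le_tsum hSD 0 (fun j _ => hDnn j)
    rwa [htD] at this
  refine ⟨min ε (D 0) / 2, div_pos (lt_min hε (hpos 0)) two_pos, ?_, ?_, ?_⟩
  · have : min ε (D 0) ≤ D 0 := min_le_right _ _
    have := hpos 0
    linarith [hD01]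
  · intro k _
    have h1 := hub k
    have h2 : min ε (D 0) / 2 ≤ D 0 / 2 := by
      have := min_le_right ε (D 0); linarith
    have := hpos 0
    linarith
  · intro k hk hnk
    have hkK : k ∈ K := ⟨hk, hnk.le⟩
    have h1 : ε ≤ 1 - fhat d D k := hmin hkK
    have h2 : min ε (D 0) / 2 ≤ ε / 2 := by
      have := min_le_left ε (D 0); linarith
    linarith
end
end

section
/- Let α > 0 and let d ≥ 1 be an integer. There exists C < ∞ depending only on d and α such that for every real L ≥ 1 and every k ∈ ℝ^d with 0 < |k| ≤ 1/L: (i) Σ_{x∈ℤ^d, |x|<L} L^α · ⟨x⟩_L^{−d−α} · (1 − cos(k·x)) ≤ C · L²·|k|², and (ii) Σ_{x∈ℤ^d, |x|>π/(2|k|)} L^α · ⟨x⟩_L^{−d−α} · (1 − cos(k·x)) ≤ C · (L|k|)^α. (Bounds on the near and far contributions in the decomposition of 1 − D̂(k).) -/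
open scoped BigOperators
open Real Filter

noncomputable section

set_option maxHeartbeats 2000000
def latSup (d : ℕ) (x : Fin d → ℤ) : ℕ := Finset.univ.sup fun i => (x i).natAbs

lemma nrm_nonneg (d x) : 0 ≤ nrm d x := norm_nonneg _

lemma dotp_eq_inner (d : ℕ) (k : EuclideanSpace ℝ (Fin d)) (x : Fin d → ℤ) :
    dotp d k x = inner ℝ k (toR d x) := by
  rw [PiLp.inner_apply]
  simp [dotp, toR, mul_comm]

lemma abs_dotp_le (d : ℕ) (k : EuclideanSpace ℝ (Fin d)) (x : Fin d → ℤ) :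
    |dotp d k x| ≤ ‖k‖ * nrm d x := by
  rw [dotp_eq_inner]
  exact abs_real_inner_le_norm k (toR d x)

lemma one_sub_cos_le_sq (t : ℝ) : 1 - Real.cos t ≤ t ^ 2 / 2 := by
  have := Real.one_sub_sq_div_two_le_cos (x := t)
  linarith

lemma one_sub_cos_le_two (t : ℝ) : 1 - Real.cos t ≤ 2 := by
  have := Real.neg_one_le_cos t
  linarith

lemma abs_coord_le_nrm (d : ℕ) (x : Fin d → ℤ) (i : Fin d) : |(x i : ℝ)| ≤ nrm d x := by
  rw [nrm, EuclideanSpace.norm_eq]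
  rw [← Real.sqrt_sq_eq_abs]
  apply Real.sqrt_le_sqrt
  have : ((x i : ℝ)) ^ 2 = ‖toR d x i‖ ^ 2 := by simp [toR]
  rw [this]
  exact Finset.single_le_sum (f := fun j => ‖toR d x j‖ ^ 2) (fun j _ => by positivity) (Finset.mem_univ i)

lemma latSup_le_nrm (d : ℕ) (hd : 1 ≤ d) (x : Fin d → ℤ) : (latSup d x : ℝ) ≤ nrm d x := by
  have : Nonempty (Fin d) := ⟨⟨0, hd⟩⟩
  obtain ⟨i, _, hi⟩ := Finset.exists_mem_eq_sup Finset.univ Finset.univ_nonempty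
    (fun i => (x i).natAbs)
  rw [latSup, hi]
  calc ((x i).natAbs : ℝ) = |(x i : ℝ)| := by
        rw [Nat.cast_natAbs, Int.cast_abs]
      _ ≤ nrm d x := abs_coord_le_nrm d x i

lemma nrm_le_sqrt_mul (d : ℕ) (x : Fin d → ℤ) :
    nrm d x ≤ Real.sqrt d * latSup d x := by
  rw [nrm, EuclideanSpace.norm_eq]
  have h1 : ∀ i, ‖toR d x i‖ ^ 2 ≤ ((latSup d x : ℝ)) ^ 2 := by
    intro i
    have h0 : ‖toR d x i‖ = ((x i).natAbs : ℝ) := by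
      simp [toR, Nat.cast_natAbs]
    rw [h0]
    have : (x i).natAbs ≤ latSup d x := Finset.le_sup (f := fun i => (x i).natAbs) (Finset.mem_univ i)
    have : ((x i).natAbs : ℝ) ≤ (latSup d x : ℝ) := by exact_mod_cast this
    nlinarith [this, Nat.cast_nonneg (α := ℝ) (x i).natAbs]
  calc Real.sqrt (∑ i, ‖toR d x i‖ ^ 2) ≤ Real.sqrt (∑ _i : Fin d, ((latSup d x : ℝ)) ^ 2) :=
        Real.sqrt_le_sqrt (Finset.sum_le_sum fun i _ => h1 i)
    _ = Real.sqrt (d * ((latSup d x : ℝ)) ^ 2) := by rw [Finset.sum_const]; simp [mul_comm]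
    _ = Real.sqrt d * latSup d x := by
        rw [Real.sqrt_mul (by positivity), Real.sqrt_sq (by positivity)]

def latBox (d n : ℕ) : Finset (Fin d → ℤ) :=
  Fintype.piFinset fun _ => Finset.Icc (-(n:ℤ)) (n:ℤ)

lemma mem_latBox {d n : ℕ} {x : Fin d → ℤ} : x ∈ latBox d n ↔ latSup d x ≤ n := by
  simp only [latBox, Fintype.mem_piFinset, Finset.mem_Icc, latSup, Finset.sup_le_iff,
    Finset.mem_univ, forall_true_left]
  refine forall_congr' fun i => ?_
  omega

lemma card_latBox (d n : ℕ) : (latBox d n).card = (2*n+1)^d := by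
  rw [latBox, Fintype.card_piFinset]
  simp only [Int.card_Icc]
  rw [Finset.prod_const]
  congr 1
  · omega
  · simp

lemma latBox_mono {d n : ℕ} : latBox d n ⊆ latBox d (n+1) := by
  intro x hx
  rw [mem_latBox] at hx ⊢
  omega

lemma pow_sub_pow_le {a b : ℝ} (d : ℕ) (hb : 0 ≤ b) (hab : b ≤ a) :
    a ^ d - b ^ d ≤ (d : ℝ) * a ^ (d-1) * (a - b) := by
  rw [← geom_sum₂_mul]
  refine mul_le_mul_of_nonneg_right ?_ (by linarith)
  have ha : 0 ≤ a := le_trans hb hab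
  calc ∑ i ∈ Finset.range d, a ^ i * b ^ (d-1-i)
      ≤ ∑ _i ∈ Finset.range d, a ^ (d-1) := by
        refine Finset.sum_le_sum fun i hi => ?_
        have hi' : i < d := Finset.mem_range.1 hi
        calc a ^ i * b ^ (d-1-i) ≤ a ^ i * a ^ (d-1-i) :=
              mul_le_mul_of_nonneg_left (pow_le_pow_left₀ hb hab _) (by positivity)
          _ = a ^ (d-1) := by rw [← pow_add]; congr 1; omega
    _ = (d : ℝ) * a ^ (d-1) := by rw [Finset.sum_const]; simp [mul_comm]

lemma card_shell_le (d n : ℕ) :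
    (((latBox d (n+1) \ latBox d n).card : ℝ)) ≤ (2*d*3^(d-1) : ℝ) * ((n:ℝ)+1)^(d-1) := by
  have hsub : latBox d n ⊆ latBox d (n+1) := latBox_mono
  rw [Finset.card_sdiff_of_subset hsub, card_latBox, card_latBox]
  have hle : (2*n+1)^d ≤ (2*(n+1)+1)^d := Nat.pow_le_pow_left (by omega) d
  rw [Nat.cast_sub hle]
  push_cast
  have h1 : ((2*((n:ℝ)+1)+1))^d - (2*(n:ℝ)+1)^d
      ≤ (d:ℝ) * (2*((n:ℝ)+1)+1)^(d-1) * ((2*((n:ℝ)+1)+1) - (2*(n:ℝ)+1)) :=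
    pow_sub_pow_le d (by positivity) (by linarith)
  have h2 : ((2*((n:ℝ)+1)+1) : ℝ) ≤ 3*((n:ℝ)+1) := by linarith
  have h3 : ((2*((n:ℝ)+1)+1) : ℝ)^(d-1) ≤ (3*((n:ℝ)+1))^(d-1) :=
    pow_le_pow_left₀ (by positivity) h2 _
  have h4 : ((3:ℝ)*((n:ℝ)+1))^(d-1) = 3^(d-1) * ((n:ℝ)+1)^(d-1) := mul_pow _ _ _
  nlinarith [h1, h3, h4, pow_nonneg (by positivity : (0:ℝ) ≤ (n:ℝ)+1) (d-1),
    pow_nonneg (by norm_num : (0:ℝ) ≤ 3) (d-1),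
    Nat.cast_nonneg (α := ℝ) d]

lemma latSup_shell {d n : ℕ} {x : Fin d → ℤ} (hx : x ∈ latBox d (n+1) \ latBox d n) :
    latSup d x = n + 1 := by
  rw [Finset.mem_sdiff, mem_latBox, mem_latBox] at hx
  omega

lemma latBox_sum_le (d : ℕ) (φ : ℕ → ℝ) (hφ : ∀ m, 0 ≤ φ m) (hφ0 : φ 0 = 0) (N : ℕ) :
    ∑ x ∈ latBox d N, φ (latSup d x)
      ≤ (2*d*3^(d-1) : ℝ) * ∑ m ∈ Finset.range (N+1), ((m:ℝ))^(d-1) * φ m := by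
  induction N with
  | zero =>
    have hL : ∑ x ∈ latBox d 0, φ (latSup d x) = 0 := by
      refine Finset.sum_eq_zero fun x hx => ?_
      have := mem_latBox.1 hx
      have : latSup d x = 0 := by omega
      rw [this, hφ0]
    rw [hL]
    refine mul_nonneg (by positivity) (Finset.sum_nonneg fun m _ => ?_)
    exact mul_nonneg (by positivity) (hφ m)
  | succ N ih =>
    have hsplit : ∑ x ∈ latBox d (N+1), φ (latSup d x)
        = (∑ x ∈ latBox d (N+1) \ latBox d N, φ (latSup d x)) + ∑ x ∈ latBox d N, φ (latSup d x) :=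
      (Finset.sum_sdiff latBox_mono).symm
    have hshell : ∑ x ∈ latBox d (N+1) \ latBox d N, φ (latSup d x)
        ≤ (2*d*3^(d-1) : ℝ) * (((N:ℝ)+1)^(d-1) * φ (N+1)) := by
      have hconst : ∑ x ∈ latBox d (N+1) \ latBox d N, φ (latSup d x)
          = ((latBox d (N+1) \ latBox d N).card : ℝ) * φ (N+1) := by
        rw [Finset.sum_congr rfl fun x hx => by rw [latSup_shell hx]]
        rw [Finset.sum_const, nsmul_eq_mul]
      rw [hconst]
      have := mul_le_mul_of_nonneg_right (card_shell_le d N) (hφ (N+1))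
      calc ((latBox d (N+1) \ latBox d N).card : ℝ) * φ (N+1)
          ≤ (2*d*3^(d-1) : ℝ) * ((N:ℝ)+1)^(d-1) * φ (N+1) := this
        _ = (2*d*3^(d-1) : ℝ) * (((N:ℝ)+1)^(d-1) * φ (N+1)) := by ring
    rw [hsplit, Finset.sum_range_succ (fun m => ((m:ℝ))^(d-1) * φ m) (N+1), mul_add]
    have : (((N+1:ℕ):ℝ))^(d-1) * φ (N+1) = ((N:ℝ)+1)^(d-1) * φ (N+1) := by push_cast; ring
    rw [this]
    linarith [hshell, ih]


lemma two_rpow_gt_one {β : ℝ} (hβ : 0 < β) : 1 < (2:ℝ) ^ β := by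
  have := Real.rpow_lt_rpow_of_exponent_lt (x := 2) (by norm_num) hβ
  simpa using this

lemma concave_step {β : ℝ} (hβ : 0 < β) (hβ1 : β ≤ 1) {a : ℝ} (ha : 1 ≤ a) :
    a + 2 ^ β - 1 ≤ a ^ (1 - β) * (a + 1) ^ β := by
  have ha0 : (0:ℝ) < a := by linarith
  have hcon := Real.concaveOn_rpow hβ.le hβ1
  set t : ℝ := 1 / a with ht
  have ht0 : 0 < t := by positivity
  have ht1 : t ≤ 1 := by rw [ht, div_le_one ha0]; linarith
  have key : (1 - t) * (1:ℝ) ^ β + t * (2:ℝ) ^ β ≤ ((1 - t) * 1 + t * 2) ^ β :=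
    hcon.2 (by norm_num : (1:ℝ) ∈ Set.Ici (0:ℝ)) (by norm_num : (2:ℝ) ∈ Set.Ici (0:ℝ))
      (by linarith) (by linarith) (by ring)
  rw [Real.one_rpow] at key
  have h2 : (1 - t) * 1 + t * 2 = 1 + t := by ring
  rw [h2] at key
  have key2 : a + (2 ^ β - 1) ≤ a * (1 + t) ^ β := by
    calc a + (2 ^ β - 1) = a * ((1 - t) + t * 2 ^ β) := by
          have hat : a * t = 1 := by rw [ht, mul_one_div_cancel ha0.ne']
          linear_combination (1 - 2 ^ β) * hat
      _ ≤ a * (1 + t) ^ β := by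
          refine mul_le_mul_of_nonneg_left ?_ ha0.le
          linarith [key]
  have key3 : a ^ (1 - β) * (a + 1) ^ β = a * (1 + t) ^ β := by
    have h4 : a + 1 = a * (1 + t) := by rw [mul_add, mul_one, ht, mul_one_div_cancel ha0.ne']
    rw [h4, Real.mul_rpow ha0.le (by positivity), ← mul_assoc, ← Real.rpow_add ha0,
      sub_add_cancel, Real.rpow_one]
  linarith [key2, key3.ge]

lemma rpow_tail_step {β : ℝ} (hβ : 0 < β) (hβ1 : β ≤ 1) {a : ℝ} (ha : 1 ≤ a) :
    (2 ^ β - 1) * (a + 1) ^ (-1 - β) ≤ a ^ (-β) - (a + 1) ^ (-β) := by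
  have ha0 : (0:ℝ) < a := by linarith
  have hb0 : (0:ℝ) < a + 1 := by linarith
  have h2b : (1:ℝ) ≤ 2 ^ β := (two_rpow_gt_one hβ).le
  have h1 : a * (a + 2 ^ β) ≤ a ^ (1 - β) * (a + 1) ^ (1 + β) := by
    have h := concave_step hβ hβ1 ha
    have h2 : (a+1) * (a + 2 ^ β - 1) ≤ (a+1) * (a ^ (1-β) * (a+1) ^ β) :=
      mul_le_mul_of_nonneg_left h hb0.le
    have h3 : (a+1) * (a ^ (1-β) * (a+1) ^ β) = a ^ (1-β) * (a+1) ^ (1+β) := by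
      rw [Real.rpow_add hb0, Real.rpow_one]; ring
    nlinarith [h2, h3]
  have h5 : a ^ β * (a + 2 ^ β) ≤ (a + 1) ^ (1 + β) := by
    have hm := mul_le_mul_of_nonneg_left h1 (Real.rpow_pos_of_pos ha0 (β - 1)).le
    have hsplit : a ^ β = a ^ (β-1) * a := by
      rw [← Real.rpow_add_one ha0.ne' (β-1)]
      congr 1
      ring
    calc a ^ β * (a + 2^β) = a ^ (β-1) * (a * (a + 2^β)) := by
          rw [hsplit]; ring
      _ ≤ a ^ (β-1) * (a ^ (1-β) * (a+1)^(1+β)) := hm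
      _ = (a+1)^(1+β) := by
          rw [← mul_assoc, ← Real.rpow_add ha0]
          norm_num
  have h6 : (a+1) ^ (-1-β) * (a + 2 ^ β) ≤ a ^ (-β) := by
    have hc : (0:ℝ) < a ^ (-β) * (a+1) ^ (-1-β) :=
      mul_pos (Real.rpow_pos_of_pos ha0 _) (Real.rpow_pos_of_pos hb0 _)
    have hm := mul_le_mul_of_nonneg_left h5 hc.le
    calc (a+1) ^ (-1-β) * (a + 2 ^ β)
        = (a ^ (-β) * (a+1) ^ (-1-β)) * (a ^ β * (a + 2 ^ β)) := by
          rw [show (a ^ (-β) * (a+1) ^ (-1-β)) * (a ^ β * (a + 2 ^ β))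
              = (a ^ (-β) * a ^ β) * ((a+1) ^ (-1-β) * (a + 2 ^ β)) by ring,
            ← Real.rpow_add ha0]
          norm_num
      _ ≤ (a ^ (-β) * (a+1) ^ (-1-β)) * (a+1) ^ (1+β) := hm
      _ = a ^ (-β) := by
          rw [mul_assoc, ← Real.rpow_add hb0]
          norm_num
  have h7 : (a+1) ^ (-β) = (a+1) ^ (-1-β) * (a+1) := by
    rw [← Real.rpow_add_one hb0.ne']
    congr 1
    ring
  nlinarith [h6, h7]

lemma tail_sum_le {β : ℝ} (hβ : 0 < β) (hβ1 : β ≤ 1) (M : ℕ) (hM : 1 ≤ M) (N : ℕ) :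
    ∑ i ∈ Finset.range N, (if M ≤ i then ((i:ℝ)) ^ (-1 - β) else 0)
      ≤ (1 + (2 ^ β - 1)⁻¹) * (M:ℝ) ^ (-β) := by
  have h2b : (1:ℝ) < 2 ^ β := two_rpow_gt_one hβ
  have hinv : (0:ℝ) ≤ (2 ^ β - 1)⁻¹ := inv_nonneg.2 (by linarith)
  have hM1 : (1:ℝ) ≤ (M:ℝ) := by exact_mod_cast hM
  have hMpos : (0:ℝ) < (M:ℝ) := by linarith
  have hRHS0 : 0 ≤ (1 + (2 ^ β - 1)⁻¹) * (M:ℝ) ^ (-β) :=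
    mul_nonneg (by linarith) (Real.rpow_nonneg hMpos.le _)
  rw [← Finset.sum_filter]
  have hfilter : (Finset.range N).filter (fun i => M ≤ i) = Finset.Ico M N := by
    ext i; simp [Finset.mem_filter, Finset.mem_range, Finset.mem_Ico, and_comm]
  rw [hfilter]
  rcases le_or_gt N M with hNM | hMN
  · rw [Finset.Ico_eq_empty (by omega)]
    simpa using hRHS0
  rw [Finset.sum_Ico_eq_sum_range]
  obtain ⟨K, hK⟩ : ∃ K, N - M = K + 1 := ⟨N - M - 1, by omega⟩
  rw [hK, Finset.sum_range_succ']
  have hg0 : ((M + 0 : ℕ):ℝ) ^ (-1-β) ≤ (M:ℝ) ^ (-β) := by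
    simp only [Nat.add_zero]
    exact Real.rpow_le_rpow_of_exponent_le hM1 (by linarith)
  have hgsum : ∑ i ∈ Finset.range K, ((M + (i+1) : ℕ):ℝ) ^ (-1-β)
      ≤ (2 ^ β - 1)⁻¹ * (M:ℝ) ^ (-β) := by
    set h : ℕ → ℝ := fun i => ((M + i : ℕ):ℝ) ^ (-β) with hh
    have hstep : ∀ i, ((M + (i+1) : ℕ):ℝ) ^ (-1-β) ≤ (2 ^ β - 1)⁻¹ * (h i - h (i+1)) := by
      intro i
      have ha : (1:ℝ) ≤ ((M + i : ℕ):ℝ) := by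
        have : 1 ≤ M + i := by omega
        exact_mod_cast this
      have := rpow_tail_step hβ hβ1 ha
      have hcast : ((M + (i+1) : ℕ):ℝ) = ((M + i : ℕ):ℝ) + 1 := by push_cast; ring
      rw [le_inv_mul_iff₀ (by linarith : (0:ℝ) < 2 ^ β - 1)]
      rw [hcast, hh]
      simp only []
      rw [show ((M + (i+1) : ℕ):ℝ) = ((M + i : ℕ):ℝ) + 1 by push_cast; ring]
      exact this
    calc ∑ i ∈ Finset.range K, ((M + (i+1) : ℕ):ℝ) ^ (-1-β)
        ≤ ∑ i ∈ Finset.range K, (2 ^ β - 1)⁻¹ * (h i - h (i+1)) :=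
          Finset.sum_le_sum fun i _ => hstep i
      _ = (2 ^ β - 1)⁻¹ * (h 0 - h K) := by
          rw [← Finset.mul_sum, Finset.sum_range_sub' h]
      _ ≤ (2 ^ β - 1)⁻¹ * h 0 := by
          have : 0 ≤ h K := Real.rpow_nonneg (by positivity) _
          have : h 0 - h K ≤ h 0 := by linarith
          exact mul_le_mul_of_nonneg_left this hinv
      _ = (2 ^ β - 1)⁻¹ * (M:ℝ) ^ (-β) := by rw [hh]; norm_num
  calc (∑ i ∈ Finset.range K, ((M + (i+1) : ℕ):ℝ) ^ (-1-β)) + ((M + 0 : ℕ):ℝ) ^ (-1-β)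
      ≤ (2 ^ β - 1)⁻¹ * (M:ℝ) ^ (-β) + (M:ℝ) ^ (-β) := add_le_add hgsum hg0
    _ = (1 + (2 ^ β - 1)⁻¹) * (M:ℝ) ^ (-β) := by ring

lemma far_finset_sum_le (d : ℕ) (hd : 1 ≤ d) {β : ℝ} (hβ : 0 < β) (hβ1 : β ≤ 1)
    {ρ : ℝ} (hρ : 0 < ρ) (s : Finset (Fin d → ℤ)) :
    ∑ x ∈ s, (if ρ < (latSup d x : ℝ) then ((latSup d x : ℝ)) ^ (-(d:ℝ) - β) else 0)
      ≤ (2*d*3^(d-1) : ℝ) * ((1 + (2 ^ β - 1)⁻¹) * ρ ^ (-β)) := by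
  have h2b : (1:ℝ) < 2 ^ β := two_rpow_gt_one hβ
  set φ : ℕ → ℝ := fun m => if ρ < (m:ℝ) then ((m:ℝ)) ^ (-(d:ℝ) - β) else 0 with hφdef
  have hφ : ∀ m, 0 ≤ φ m := by
    intro m
    by_cases h : ρ < (m:ℝ)
    · simp only [hφdef, if_pos h]
      exact Real.rpow_nonneg (Nat.cast_nonneg m) _
    · simp [hφdef, if_neg h]
  have hφ0 : φ 0 = 0 := by
    simp only [hφdef, Nat.cast_zero]
    rw [if_neg (by linarith)]
  set N := s.sup (latSup d) with hN
  have hsub : s ⊆ latBox d N := fun x hx => mem_latBox.2 (Finset.le_sup hx)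
  set M : ℕ := ⌊ρ⌋₊ + 1 with hM
  have hM1 : 1 ≤ M := by omega
  have hMρ : ρ < (M:ℝ) := by
    rw [hM]; push_cast
    exact Nat.lt_floor_add_one ρ
  have hpoint : ∀ m : ℕ, ((m:ℝ))^(d-1) * φ m = (if M ≤ m then ((m:ℝ)) ^ (-1 - β) else 0) := by
    intro m
    by_cases h : ρ < (m:ℝ)
    · have hm1 : 1 ≤ m := by
        by_contra hm
        have : m = 0 := by omega
        rw [this] at h; simp at h; linarith
      have hmpos : (0:ℝ) < (m:ℝ) := by exact_mod_cast hm1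
      have hcond : M ≤ m := by
        have : ⌊ρ⌋₊ < m := (Nat.floor_lt hρ.le).2 h
        omega
      rw [hφdef]
      simp only [if_pos h, if_pos hcond]
      rw [← Real.rpow_natCast ((m:ℝ)) (d-1), ← Real.rpow_add hmpos]
      congr 1
      rw [Nat.cast_sub hd]
      push_cast
      ring
    · have hcond : ¬ (M ≤ m) := fun hc => h (lt_of_lt_of_le hMρ (by exact_mod_cast hc))
      rw [hφdef]
      simp only [if_neg h, if_neg hcond, mul_zero]
  have hnn : (0:ℝ) ≤ 1 + (2 ^ β - 1)⁻¹ := by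
    have : (0:ℝ) ≤ (2 ^ β - 1)⁻¹ := inv_nonneg.2 (by linarith)
    linarith
  calc ∑ x ∈ s, φ (latSup d x)
      ≤ ∑ x ∈ latBox d N, φ (latSup d x) :=
        Finset.sum_le_sum_of_subset_of_nonneg hsub (fun x _ _ => hφ _)
    _ ≤ (2*d*3^(d-1) : ℝ) * ∑ m ∈ Finset.range (N+1), ((m:ℝ))^(d-1) * φ m :=
        latBox_sum_le d φ hφ hφ0 N
    _ ≤ (2*d*3^(d-1) : ℝ) * ((1 + (2 ^ β - 1)⁻¹) * ((M:ℝ)) ^ (-β)) := by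
        refine mul_le_mul_of_nonneg_left ?_ (by positivity)
        rw [Finset.sum_congr rfl fun m _ => hpoint m]
        exact tail_sum_le hβ hβ1 M hM1 (N+1)
    _ ≤ (2*d*3^(d-1) : ℝ) * ((1 + (2 ^ β - 1)⁻¹) * ρ ^ (-β)) := by
        refine mul_le_mul_of_nonneg_left (mul_le_mul_of_nonneg_left ?_ hnn) (by positivity)
        exact Real.rpow_le_rpow_of_nonpos hρ hMρ.le (by linarith)

lemma tsum_le_of_forall_sum_le {ι : Type*} {f : ι → ℝ} {c : ℝ} (hc : 0 ≤ c)
    (h : ∀ s : Finset ι, ∑ i ∈ s, f i ≤ c) : ∑' i, f i ≤ c := by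
  by_cases hs : Summable f
  · exact Summable.tsum_le_of_sum_le hs h
  · rw [tsum_eq_zero_of_not_summable hs]; exact hc

/-- Bounds on the near (`|x| < L`) and far (`|x| > π/(2|k|)`) contributions in
the decomposition of `1 - D̂(k)`, with `C` depending only on `d` and `α`. -/
theorem near_far_contributions
    (d : ℕ) (hd : 1 ≤ d) (α : ℝ) (hα : 0 < α) :
    ∃ C : ℝ, 0 < C ∧
      ∀ L : ℝ, 1 ≤ L →
      ∀ k : EuclideanSpace ℝ (Fin d), 0 < ‖k‖ → ‖k‖ ≤ 1 / L →
        (∑' x : Fin d → ℤ,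
            (if nrm d x < L then
              L ^ α * vee (nrm d x) L ^ (-(d : ℝ) - α) * (1 - Real.cos (dotp d k x))
            else 0))
          ≤ C * L ^ (2 : ℝ) * ‖k‖ ^ (2 : ℝ) ∧
        (∑' x : Fin d → ℤ,
            (if Real.pi / (2 * ‖k‖) < nrm d x then
              L ^ α * vee (nrm d x) L ^ (-(d : ℝ) - α) * (1 - Real.cos (dotp d k x))
            else 0))
          ≤ C * (L * ‖k‖) ^ α := by
  classical
  set β := min α 1 with hβdef
  have hβ : 0 < β := lt_min hα one_pos
  have hβ1 : β ≤ 1 := min_le_right _ _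
  have hβα : β ≤ α := min_le_left _ _
  have h2b : (1:ℝ) < 2 ^ β := two_rpow_gt_one hβ
  have hd1 : (1:ℝ) ≤ (d:ℝ) := by exact_mod_cast hd
  have hsd : (1:ℝ) ≤ Real.sqrt d := by
    rw [show (1:ℝ) = Real.sqrt 1 by simp]
    exact Real.sqrt_le_sqrt hd1
  have hsd0 : (0:ℝ) < Real.sqrt d := by linarith
  set K' : ℝ := (2*d*3^(d-1) : ℝ) * (1 + (2 ^ β - 1)⁻¹) with hK'def
  have hK' : 0 < K' := by
    apply mul_pos
    · have : (0:ℝ) < (d:ℝ) := by linarith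
      positivity
    · have : (0:ℝ) ≤ (2 ^ β - 1)⁻¹ := inv_nonneg.2 (by linarith)
      linarith
  set K2 : ℝ := 2 * K' * Real.sqrt d with hK2def
  have hK2 : 0 < K2 := by positivity
  set C : ℝ := (5:ℝ)^d + K2 with hCdef
  have hC : 0 < C := by positivity
  refine ⟨C, hC, ?_⟩
  intro L hL k hk hkL
  have hL0 : (0:ℝ) < L := by linarith
  have hπ : (3:ℝ) < Real.pi := Real.pi_gt_three
  set R := Real.pi / (2*‖k‖) with hRdef
  have hkinv : L ≤ 1/‖k‖ := by
    rw [le_div_iff₀ hk]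
    rw [div_eq_mul_inv] at hkL
    calc L * ‖k‖ = ‖k‖ * L := mul_comm _ _
      _ ≤ 1/L * L := mul_le_mul_of_nonneg_right hkL hL0.le
      _ = 1 := by field_simp
  have hReq : R = Real.pi/2 * (1/‖k‖) := by rw [hRdef]; ring
  have hR_ge : Real.pi/2 * L ≤ R := by
    rw [hReq]
    apply mul_le_mul_of_nonneg_left hkinv (by positivity)
  have hRL : L < R := by nlinarith
  have hR1 : (1:ℝ) < R := by linarith
  have hR0 : (0:ℝ) < R := by linarith
  have hcos_nonneg : ∀ t : ℝ, 0 ≤ 1 - Real.cos t := fun t => by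
    have := Real.cos_le_one t; linarith
  have hterm_nonneg : ∀ x : Fin d → ℤ,
      0 ≤ L ^ α * vee (nrm d x) L ^ (-(d:ℝ) - α) * (1 - Real.cos (dotp d k x)) := by
    intro x
    apply mul_nonneg (mul_nonneg (Real.rpow_nonneg hL0.le α) _) (hcos_nonneg _)
    apply Real.rpow_nonneg
    rw [vee]
    have : L ≤ max (nrm d x) L := le_max_right _ _
    positivity
  have hpi2 : (1:ℝ) ≤ Real.pi/2 := by linarith
  have hexp_nonpos : -(d:ℝ) - α ≤ 0 := by linarith
  have hvee_le : ∀ x : Fin d → ℤ,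
      vee (nrm d x) L ^ (-(d:ℝ) - α) ≤ (max (nrm d x) L) ^ (-(d:ℝ) - α) := by
    intro x
    have hmax : (0:ℝ) < max (nrm d x) L := lt_of_lt_of_le hL0 (le_max_right _ _)
    rw [vee, Real.mul_rpow (by positivity) hmax.le]
    have h1 : (Real.pi/2) ^ (-(d:ℝ)-α) ≤ 1 :=
      Real.rpow_le_one_of_one_le_of_nonpos hpi2 hexp_nonpos
    nlinarith [Real.rpow_nonneg hmax.le (-(d:ℝ)-α),
      Real.rpow_nonneg (le_of_lt (by positivity : (0:ℝ) < Real.pi/2)) (-(d:ℝ)-α)]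
  constructor
  · -- near contribution
    set c₀ : ℝ := L ^ (-(d:ℝ)) * (‖k‖^2 * L^2 / 2) with hc₀def
    have hc₀ : 0 ≤ c₀ := by positivity
    have hpt : ∀ x : Fin d → ℤ,
        (if nrm d x < L then
          L ^ α * vee (nrm d x) L ^ (-(d:ℝ) - α) * (1 - Real.cos (dotp d k x)) else 0)
        ≤ (if nrm d x < L then c₀ else 0) := by
      intro x
      by_cases h : nrm d x < L
      · rw [if_pos h, if_pos h]
        have hnn : 0 ≤ nrm d x := nrm_nonneg d x
        have hvee2 : vee (nrm d x) L ^ (-(d:ℝ) - α) ≤ L ^ (-(d:ℝ) - α) := by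
          have := hvee_le x
          rwa [max_eq_right h.le] at this
        have hcos : 1 - Real.cos (dotp d k x) ≤ ‖k‖^2 * L^2 / 2 := by
          have h1 := one_sub_cos_le_sq (dotp d k x)
          have h2 : (dotp d k x)^2 ≤ (‖k‖ * nrm d x)^2 := by
            rw [← sq_abs (dotp d k x)]
            exact pow_le_pow_left₀ (abs_nonneg _) (abs_dotp_le d k x) 2
          have h3 : (‖k‖ * nrm d x)^2 ≤ (‖k‖*L)^2 :=
            pow_le_pow_left₀ (by positivity)
              (mul_le_mul_of_nonneg_left h.le (norm_nonneg k)) 2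
          have h4 : (‖k‖*L)^2 = ‖k‖^2*L^2 := mul_pow _ _ _
          linarith
        calc L ^ α * vee (nrm d x) L ^ (-(d:ℝ) - α) * (1 - Real.cos (dotp d k x))
            ≤ L ^ α * L ^ (-(d:ℝ) - α) * (‖k‖^2 * L^2 / 2) := by
              apply mul_le_mul _ hcos (hcos_nonneg _) (by positivity)
              exact mul_le_mul_of_nonneg_left hvee2 (Real.rpow_nonneg hL0.le α)
          _ = c₀ := by
              rw [hc₀def, ← Real.rpow_add hL0,
                show α + (-(d:ℝ) - α) = -(d:ℝ) by ring]
      · rw [if_neg h, if_neg h]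
    have hbound : ∀ s : Finset (Fin d → ℤ),
        ∑ x ∈ s, (if nrm d x < L then
          L ^ α * vee (nrm d x) L ^ (-(d:ℝ) - α) * (1 - Real.cos (dotp d k x)) else 0)
        ≤ C * L ^ (2:ℝ) * ‖k‖ ^ (2:ℝ) := by
      intro s
      set B := latBox d ⌈L⌉₊ with hBdef
      have hmem : ∀ x : Fin d → ℤ, nrm d x < L → x ∈ B := by
        intro x hx
        rw [hBdef, mem_latBox]
        have h1 : (latSup d x : ℝ) ≤ nrm d x := latSup_le_nrm d hd x
        have h2 : (latSup d x : ℝ) < (⌈L⌉₊ : ℝ) :=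
          lt_of_le_of_lt h1 (lt_of_lt_of_le hx (Nat.le_ceil L))
        exact_mod_cast h2.le
      have hstep1 : ∑ x ∈ s, (if nrm d x < L then
            L ^ α * vee (nrm d x) L ^ (-(d:ℝ) - α) * (1 - Real.cos (dotp d k x)) else 0)
          = ∑ x ∈ s ∩ B, (if nrm d x < L then
            L ^ α * vee (nrm d x) L ^ (-(d:ℝ) - α) * (1 - Real.cos (dotp d k x)) else 0) := by
        refine (Finset.sum_subset Finset.inter_subset_left ?_).symm
        intro x hxs hxn
        rw [if_neg]
        intro hcon
        exact hxn (Finset.mem_inter.2 ⟨hxs, hmem x hcon⟩)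
      rw [hstep1]
      have hstep2 : ∑ x ∈ s ∩ B, (if nrm d x < L then
            L ^ α * vee (nrm d x) L ^ (-(d:ℝ) - α) * (1 - Real.cos (dotp d k x)) else 0)
          ≤ ∑ _x ∈ s ∩ B, c₀ := by
        refine Finset.sum_le_sum fun x hx => le_trans (hpt x) ?_
        by_cases h : nrm d x < L
        · rw [if_pos h]
        · rw [if_neg h]; exact hc₀
      have hcard : ((s ∩ B).card : ℝ) ≤ (5*L)^d := by
        have h1 : (s ∩ B).card ≤ B.card := Finset.card_le_card Finset.inter_subset_right
        have h2 : (B.card : ℝ) = ((2*⌈L⌉₊+1 : ℕ) : ℝ)^d := by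
          rw [hBdef, card_latBox]; push_cast; ring
        have h3 : ((2*⌈L⌉₊+1 : ℕ) : ℝ) ≤ 5*L := by
          have := Nat.ceil_lt_add_one hL0.le
          push_cast
          nlinarith
        calc ((s ∩ B).card : ℝ) ≤ (B.card : ℝ) := by exact_mod_cast h1
          _ = ((2*⌈L⌉₊+1 : ℕ) : ℝ)^d := h2
          _ ≤ (5*L)^d := pow_le_pow_left₀ (by positivity) h3 d
      have hfinal : ((s ∩ B).card : ℝ) * c₀ ≤ (5:ℝ)^d * (‖k‖^2 * L^2 / 2) := by
        have h5 : ((5:ℝ)*L)^d * c₀ = (5:ℝ)^d * (‖k‖^2 * L^2 / 2) := by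
          rw [hc₀def, mul_pow, ← Real.rpow_natCast L d, ← mul_assoc,
            mul_assoc ((5:ℝ)^d) _ _, ← Real.rpow_add hL0,
            show (d:ℝ) + -(d:ℝ) = 0 by ring, Real.rpow_zero, mul_one]
        rw [← h5]
        exact mul_le_mul_of_nonneg_right hcard hc₀
      have hL2 : L ^ (2:ℝ) = L^2 := by
        rw [show (2:ℝ) = ((2:ℕ):ℝ) by norm_num, Real.rpow_natCast]
      have hk2 : ‖k‖ ^ (2:ℝ) = ‖k‖^2 := by
        rw [show (2:ℝ) = ((2:ℕ):ℝ) by norm_num, Real.rpow_natCast]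
      calc ∑ x ∈ s ∩ B, (if nrm d x < L then
            L ^ α * vee (nrm d x) L ^ (-(d:ℝ) - α) * (1 - Real.cos (dotp d k x)) else 0)
          ≤ ∑ _x ∈ s ∩ B, c₀ := hstep2
        _ = ((s ∩ B).card : ℝ) * c₀ := by rw [Finset.sum_const, nsmul_eq_mul]
        _ ≤ (5:ℝ)^d * (‖k‖^2 * L^2 / 2) := hfinal
        _ ≤ C * L ^ (2:ℝ) * ‖k‖ ^ (2:ℝ) := by
            rw [hL2, hk2, hCdef]
            nlinarith [sq_nonneg (‖k‖*L), sq_nonneg ‖k‖, sq_nonneg L, hK2,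
              pow_pos (by norm_num : (0:ℝ) < 5) d]
    exact tsum_le_of_forall_sum_le (by positivity) hbound
  · -- far contribution
    set ρ := R / Real.sqrt d with hρdef
    have hρ : 0 < ρ := by positivity
    have hpt : ∀ x : Fin d → ℤ,
        (if R < nrm d x then
          L ^ α * vee (nrm d x) L ^ (-(d:ℝ) - α) * (1 - Real.cos (dotp d k x)) else 0)
        ≤ 2 * L^α * R^(β-α) *
          (if ρ < (latSup d x : ℝ) then ((latSup d x : ℝ)) ^ (-(d:ℝ) - β) else 0) := by
      intro x
      have hite_nonneg : 0 ≤ (if ρ < (latSup d x : ℝ) then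
          ((latSup d x : ℝ)) ^ (-(d:ℝ) - β) else 0) := by
        by_cases h : ρ < (latSup d x : ℝ)
        · rw [if_pos h]; exact Real.rpow_nonneg (Nat.cast_nonneg _) _
        · rw [if_neg h]
      by_cases h : R < nrm d x
      · have hnrm1 : (1:ℝ) < nrm d x := lt_trans hR1 h
        have hnrm0 : (0:ℝ) < nrm d x := by linarith
        have hsqle : nrm d x ≤ Real.sqrt d * latSup d x := nrm_le_sqrt_mul d x
        have hls : ρ < (latSup d x : ℝ) := by
          rw [hρdef, div_lt_iff₀ hsd0]
          nlinarith
        have hls1 : (1:ℝ) ≤ (latSup d x : ℝ) := by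
          by_contra hcon
          push_neg at hcon
          have h0 : latSup d x = 0 := by
            have : latSup d x < 1 := by exact_mod_cast hcon
            omega
          rw [h0] at hsqle
          simp at hsqle
          linarith
        rw [if_pos h, if_pos hls]
        have hvee2 : vee (nrm d x) L ^ (-(d:ℝ) - α) ≤ (nrm d x) ^ (-(d:ℝ) - α) := by
          have := hvee_le x
          rwa [max_eq_left (by linarith : L ≤ nrm d x)] at this
        have hchain : (nrm d x) ^ (-(d:ℝ)-α) ≤ R^(β-α) * ((latSup d x : ℝ)) ^ (-(d:ℝ)-β) := by
          have e1 : (nrm d x) ^ (-(d:ℝ)-α)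
              = (nrm d x)^(β-α) * (nrm d x)^(-(d:ℝ)-β) := by
            rw [← Real.rpow_add hnrm0]
            congr 1
            ring
          have e2 : (nrm d x)^(β-α) ≤ R^(β-α) :=
            Real.rpow_le_rpow_of_nonpos hR0 h.le (by linarith)
          have e3 : (nrm d x)^(-(d:ℝ)-β) ≤ ((latSup d x : ℝ))^(-(d:ℝ)-β) :=
            Real.rpow_le_rpow_of_nonpos (by linarith)
              (latSup_le_nrm d hd x) (by linarith)
          rw [e1]
          apply mul_le_mul e2 e3 (Real.rpow_nonneg hnrm0.le _) (Real.rpow_nonneg hR0.le _)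
        have hcos2 : 1 - Real.cos (dotp d k x) ≤ 2 := one_sub_cos_le_two _
        calc L ^ α * vee (nrm d x) L ^ (-(d:ℝ) - α) * (1 - Real.cos (dotp d k x))
            ≤ L ^ α * (R^(β-α) * ((latSup d x : ℝ)) ^ (-(d:ℝ)-β)) * 2 := by
              apply mul_le_mul _ hcos2 (hcos_nonneg _) _
              · exact mul_le_mul_of_nonneg_left (le_trans hvee2 hchain)
                  (Real.rpow_nonneg hL0.le α)
              · apply mul_nonneg (Real.rpow_nonneg hL0.le α)
                apply mul_nonneg (Real.rpow_nonneg hR0.le _)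
                  (Real.rpow_nonneg (Nat.cast_nonneg _) _)
          _ = 2 * L^α * R^(β-α) * ((latSup d x : ℝ)) ^ (-(d:ℝ)-β) := by ring
      · rw [if_neg h]
        apply mul_nonneg _ hite_nonneg
        apply mul_nonneg (mul_nonneg (by norm_num) (Real.rpow_nonneg hL0.le α))
          (Real.rpow_nonneg hR0.le _)
    have hbound : ∀ s : Finset (Fin d → ℤ),
        ∑ x ∈ s, (if R < nrm d x then
          L ^ α * vee (nrm d x) L ^ (-(d:ℝ) - α) * (1 - Real.cos (dotp d k x)) else 0)
        ≤ C * (L * ‖k‖) ^ α := by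
      intro s
      have hc2 : (0:ℝ) ≤ 2 * L^α * R^(β-α) := by
        apply mul_nonneg (mul_nonneg (by norm_num) (Real.rpow_nonneg hL0.le α))
          (Real.rpow_nonneg hR0.le _)
      have hstep : ∑ x ∈ s, (if R < nrm d x then
            L ^ α * vee (nrm d x) L ^ (-(d:ℝ) - α) * (1 - Real.cos (dotp d k x)) else 0)
          ≤ 2 * L^α * R^(β-α) * (K' * ρ ^ (-β)) := by
        calc ∑ x ∈ s, (if R < nrm d x then
              L ^ α * vee (nrm d x) L ^ (-(d:ℝ) - α) * (1 - Real.cos (dotp d k x)) else 0)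
            ≤ ∑ x ∈ s, 2 * L^α * R^(β-α) *
              (if ρ < (latSup d x : ℝ) then ((latSup d x : ℝ)) ^ (-(d:ℝ) - β) else 0) :=
              Finset.sum_le_sum fun x _ => hpt x
          _ = 2 * L^α * R^(β-α) * ∑ x ∈ s,
              (if ρ < (latSup d x : ℝ) then ((latSup d x : ℝ)) ^ (-(d:ℝ) - β) else 0) := by
              rw [Finset.mul_sum]
          _ ≤ 2 * L^α * R^(β-α) * ((2*d*3^(d-1) : ℝ) * ((1 + (2 ^ β - 1)⁻¹) * ρ ^ (-β))) := by
              apply mul_le_mul_of_nonneg_left _ hc2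
              exact far_finset_sum_le d hd hβ hβ1 hρ s
          _ = 2 * L^α * R^(β-α) * (K' * ρ ^ (-β)) := by rw [hK'def]; ring
      refine le_trans hstep ?_
      -- arithmetic: 2 L^α R^(β-α) K' ρ^(-β) ≤ K2 L^α ‖k‖^α ≤ C (L‖k‖)^α
      have hρpow : ρ ^ (-β) = R ^ (-β) * (Real.sqrt d) ^ β := by
        rw [hρdef, div_eq_mul_inv, Real.mul_rpow hR0.le (inv_nonneg.2 hsd0.le),
          Real.inv_rpow hsd0.le, Real.rpow_neg hsd0.le, inv_inv]
      have hRpow : R^(β-α) * R^(-β) = R^(-α) := by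
        rw [← Real.rpow_add hR0]
        congr 1
        ring
      have hsdpow : (Real.sqrt d) ^ β ≤ Real.sqrt d := by
        calc (Real.sqrt d) ^ β ≤ (Real.sqrt d) ^ (1:ℝ) :=
              Real.rpow_le_rpow_of_exponent_le hsd hβ1
          _ = Real.sqrt d := Real.rpow_one _
      have hRk : R^(-α) ≤ ‖k‖^α := by
        have h1 : 1/‖k‖ ≤ R := by
          rw [hReq]
          nlinarith [div_pos one_pos hk]
        have h2 : R^(-α) ≤ (1/‖k‖)^(-α) :=
          Real.rpow_le_rpow_of_nonpos (by positivity) h1 (by linarith)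
        have h3 : ((1:ℝ)/‖k‖)^(-α) = ‖k‖^α := by
          rw [one_div, Real.inv_rpow (norm_nonneg k), Real.rpow_neg (norm_nonneg k), inv_inv]
        rw [h3] at h2
        exact h2
      have heq : 2 * L^α * R^(β-α) * (K' * ρ ^ (-β))
          = (2 * K' * (Real.sqrt d)^β) * (L^α * R^(-α)) := by
        rw [hρpow, ← hRpow]
        ring
      rw [heq]
      have hfin : (2 * K' * (Real.sqrt d)^β) * (L^α * R^(-α))
          ≤ K2 * (L^α * ‖k‖^α) := by
        apply mul_le_mul
        · rw [hK2def]
          exact mul_le_mul_of_nonneg_left hsdpow (by positivity)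
        · exact mul_le_mul_of_nonneg_left hRk (Real.rpow_nonneg hL0.le α)
        · exact mul_nonneg (Real.rpow_nonneg hL0.le α) (Real.rpow_nonneg hR0.le _)
        · positivity
      refine le_trans hfin ?_
      rw [Real.mul_rpow hL0.le (norm_nonneg k), hCdef]
      have : (0:ℝ) ≤ L^α * ‖k‖^α :=
        mul_nonneg (Real.rpow_nonneg hL0.le α) (Real.rpow_nonneg (norm_nonneg k) α)
      nlinarith [pow_pos (by norm_num : (0:ℝ) < 5) d]
    exact tsum_le_of_forall_sum_le (by positivity) hbound
end
end
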